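/- Let l : ℝ³ → [0,1] be a smooth radial function with l(p) = 0 for |p| ≤ 1 and l(p) = 1 for |p| ≥ 2. For s > 0 define χ_s(p) = l(sp) and h_s := 𝓕(1 − χ_s) (a Schwartz function, since 1 − χ_s is smooth and compactly supported). For R > 0 define f_R(x) = sup_{|y| ≤ R} |h_s(x−y) − h_s(x)| and w_R(x) = (2/π²) f_R(x) ∫_{ℝ³} f_R(y) dy. Then there exists a constant C, depending only on l, such that for all s > 0 and all 0 < R ≤ s: sup_{x∈ℝ³} w_R(x) ≤ C R²/s⁵ and ∫_{ℝ³} w_R(x) dx ≤ C R²/s². -/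

import Mathlib

noncomputable section

open MeasureTheory Real
open scoped BigOperators

abbrev E3 := EuclideanSpace ℝ (Fin 3)

/-- Fourier transform on ℝ³, physics convention:
`𝓕g(p) = (2π)^{-3/2} ∫ g(x) e^{-ip·x} dx`. -/
def ftransform3 (g : E3 → ℂ) (p : E3) : ℂ :=
  (((2 * π) ^ (-(3:ℝ)/2) : ℝ) : ℂ) *
    ∫ x : E3, Complex.exp (-(Complex.I * ((inner ℝ p x : ℝ) : ℂ))) * g x

/-- `f_R(x) = sup_{|y| ≤ R} |h(x-y) - h(x)|`. -/
def fRcut (h : E3 → ℂ) (R : ℝ) (x : E3) : ℝ :=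
  ⨆ y : Metric.closedBall (0 : E3) R, ‖h (x - (y : E3)) - h x‖

/-- `w_R(x) = (2/π²) f_R(x) ∫ f_R(y) dy`. -/
def wR3 (h : E3 → ℂ) (R : ℝ) (x : E3) : ℝ :=
  (2 / π ^ 2) * fRcut h R x * ∫ y : E3, fRcut h R y

open scoped FourierTransform RealInnerProductSpace

/-- A smooth compactly supported function is a Schwartz function. -/
def SchwartzOfCompactSupport (f : E3 → ℂ) (hf : ContDiff ℝ (⊤ : ℕ∞) f)
    (h : HasCompactSupport f) : SchwartzMap E3 ℂ where
  toFun := f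
  smooth' := hf.of_le (by simp)
  decay' := by
    intro k n
    have hc : Continuous fun x : E3 => ‖x‖ ^ k * ‖iteratedFDeriv ℝ n f x‖ :=
      (continuous_norm.pow k).mul (hf.continuous_iteratedFDeriv (by exact_mod_cast le_top)).norm
    have hcs : HasCompactSupport fun x : E3 => ‖x‖ ^ k * ‖iteratedFDeriv ℝ n f x‖ :=
      ((h.iteratedFDeriv n).norm).mul_left
    obtain ⟨x₀, hx₀⟩ := hc.exists_forall_ge_of_hasCompactSupport hcs
    exact ⟨_, hx₀⟩

lemma schwartz_diff_decay (H : SchwartzMap E3 ℂ) :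
    ∃ K, 0 < K ∧ ∀ x y : E3, ‖y‖ ≤ 1 →
      ‖H (x - y) - H x‖ ≤ K * ‖y‖ * ((1 + ‖x‖) ^ 4)⁻¹ := by
  obtain ⟨C₁, hC₁pos, hC₁⟩ := H.decay 0 1
  obtain ⟨C₄, hC₄pos, hC₄⟩ := H.decay 4 1
  have key : ∀ (z : E3) (k : ℕ) (C : ℝ),
      (∀ w, ‖w‖ ^ k * ‖iteratedFDeriv ℝ 1 (⇑H) w‖ ≤ C) →
      ‖z‖ ^ k * ‖fderiv ℝ (⇑H) z‖ ≤ C := by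
    intro z k C hC
    have h0 : ‖fderiv ℝ (⇑H) z‖ = ‖iteratedFDeriv ℝ 1 (⇑H) z‖ := by
      rw [show (1:ℕ) = 0 + 1 from rfl, ← norm_iteratedFDeriv_fderiv,
        norm_iteratedFDeriv_zero]
    rw [h0]; exact hC z
  refine ⟨81 * (C₁ + 16 * C₄), by positivity, fun x y hy => ?_⟩
  set K := 81 * (C₁ + 16 * C₄) with hKdef
  have hx4 : (0:ℝ) < (1 + ‖x‖) ^ 4 := by positivity
  have hgrad : ∀ z ∈ Metric.closedBall x 1,
      ‖fderiv ℝ (⇑H) z‖ ≤ K * ((1 + ‖x‖) ^ 4)⁻¹ := by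
    intro z hz
    rw [Metric.mem_closedBall, dist_eq_norm] at hz
    have hA : ‖fderiv ℝ (⇑H) z‖ * (1 + ‖x‖) ^ 4 ≤ K := by
      by_cases hx2 : ‖x‖ ≤ 2
      · have h1 : ‖fderiv ℝ (⇑H) z‖ ≤ C₁ := by
          have := key z 0 C₁ hC₁; simpa using this
        have h2 : (1 + ‖x‖) ^ 4 ≤ 81 := by
          have h3 : (1 + ‖x‖) ≤ 3 := by linarith
          calc (1 + ‖x‖) ^ 4 ≤ 3 ^ 4 := by
                apply pow_le_pow_left₀ (by positivity) h3
            _ = 81 := by norm_num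
        nlinarith [norm_nonneg (fderiv ℝ (⇑H) z), hC₄pos,
          mul_le_mul h1 h2 (by positivity) hC₁pos.le]
      · push_neg at hx2
        have hz2 : ‖x‖ / 2 ≤ ‖z‖ := by
          have h1 : ‖x‖ - ‖z‖ ≤ ‖x - z‖ := norm_sub_norm_le x z
          have h2 : ‖x - z‖ = ‖z - x‖ := norm_sub_rev x z
          linarith
        have h4 : ‖z‖ ^ 4 * ‖fderiv ℝ (⇑H) z‖ ≤ C₄ := key z 4 C₄ hC₄
        have ha : (0:ℝ) ≤ ‖fderiv ℝ (⇑H) z‖ := norm_nonneg _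
        have hstep : 1 + ‖x‖ ≤ 3 / 2 * ‖x‖ := by linarith
        calc ‖fderiv ℝ (⇑H) z‖ * (1 + ‖x‖) ^ 4
            ≤ ‖fderiv ℝ (⇑H) z‖ * (3 / 2 * ‖x‖) ^ 4 := by
              gcongr
          _ = 81 * ((‖x‖ / 2) ^ 4 * ‖fderiv ℝ (⇑H) z‖) := by ring
          _ ≤ 81 * (‖z‖ ^ 4 * ‖fderiv ℝ (⇑H) z‖) := by
              gcongr
          _ ≤ 81 * C₄ := by linarith
          _ ≤ K := by nlinarith
    calc ‖fderiv ℝ (⇑H) z‖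
        = ‖fderiv ℝ (⇑H) z‖ * (1 + ‖x‖) ^ 4 * ((1 + ‖x‖) ^ 4)⁻¹ := by
          field_simp
      _ ≤ K * ((1 + ‖x‖) ^ 4)⁻¹ := by gcongr
  have hxmem : x ∈ Metric.closedBall x 1 := Metric.mem_closedBall_self one_pos.le
  have hxymem : x - y ∈ Metric.closedBall x 1 := by
    rw [Metric.mem_closedBall, dist_eq_norm]
    simpa using hy
  have hmv := (convex_closedBall x 1).norm_image_sub_le_of_norm_fderiv_le
    (fun z _ => H.differentiable.differentiableAt) hgrad hxmem hxymem
  have hsub : x - y - x = -y := by abel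
  rw [hsub, norm_neg] at hmv
  calc ‖H (x - y) - H x‖ ≤ K * ((1 + ‖x‖) ^ 4)⁻¹ * ‖y‖ := hmv
    _ = K * ‖y‖ * ((1 + ‖x‖) ^ 4)⁻¹ := by ring

lemma ftransform3_eq_fourier (g : E3 → ℂ) (p : E3) :
    ftransform3 g p = (((2 * π) ^ (-(3:ℝ)/2) : ℝ) : ℂ) * 𝓕 g ((2 * π)⁻¹ • p) := by
  rw [Real.fourier_eq']
  unfold ftransform3
  congr 1
  refine integral_congr_ae (Filter.Eventually.of_forall fun v => ?_)
  beta_reduce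
  rw [smul_eq_mul]
  congr 1
  have h1 : ⟪v, (2 * π)⁻¹ • p⟫ = (2 * π)⁻¹ * ⟪v, p⟫ := real_inner_smul_right _ _ _
  have hπ : (2 * π : ℝ) ≠ 0 := by positivity
  have h2 : -2 * π * ((2 * π)⁻¹ * ⟪v, p⟫) = -⟪v, p⟫ := by
    field_simp
  rw [h1, h2, real_inner_comm p v]
  push_cast
  ring

lemma ftransform3_comp_smul (u : E3 → ℂ) (s : ℝ) (hs : 0 < s) (x : E3) :
    ftransform3 (fun p => u (s • p)) x
      = (((s ^ 3)⁻¹ : ℝ) : ℂ) * ftransform3 u (s⁻¹ • x) := by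
  unfold ftransform3
  have hint : ∀ q : E3,
      Complex.exp (-(Complex.I * ((⟪x, q⟫ : ℝ) : ℂ))) * u (s • q)
        = (fun v => Complex.exp (-(Complex.I * ((⟪s⁻¹ • x, v⟫ : ℝ) : ℂ))) * u v)
            (s • q) := by
    intro q
    simp only
    congr 3
    rw [real_inner_smul_left, real_inner_smul_right, ← mul_assoc,
      inv_mul_cancel₀ hs.ne', one_mul]
  have hF : (∫ q : E3, Complex.exp (-(Complex.I * ((⟪x, q⟫ : ℝ) : ℂ))) * u (s • q))
      = ((s ^ 3)⁻¹ : ℝ) • ∫ v : E3,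
          Complex.exp (-(Complex.I * ((⟪s⁻¹ • x, v⟫ : ℝ) : ℂ))) * u v := by
    rw [integral_congr_ae (Filter.Eventually.of_forall hint),
      MeasureTheory.Measure.integral_comp_smul volume
        (fun v => Complex.exp (-(Complex.I * ((⟪s⁻¹ • x, v⟫ : ℝ) : ℂ))) * u v) s,
      finrank_euclideanSpace_fin, abs_of_pos (by positivity : (0:ℝ) < (s ^ 3)⁻¹)]
  rw [hF, Complex.real_smul]
  push_cast
  ring

lemma h1_diff_decay (u : E3 → ℂ) (hcd : ContDiff ℝ (⊤ : ℕ∞) u) (hsupp : HasCompactSupport u) :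
    ∃ K, 0 < K ∧ ∀ x y : E3, ‖y‖ ≤ 1 →
      ‖ftransform3 u (x - y) - ftransform3 u x‖ ≤ K * ‖y‖ * ((1 + ‖x‖) ^ 4)⁻¹ := by
  set U := SchwartzOfCompactSupport u hcd hsupp with hU
  set H := SchwartzMap.fourierTransformCLM ℂ U with hH
  obtain ⟨K', hK'pos, hK'⟩ := schwartz_diff_decay H
  set a := (2 * π)⁻¹ with hadef
  have ha : 0 < a := by positivity
  have ha1 : a ≤ 1 := by
    rw [hadef]
    rw [inv_le_one_iff₀]
    right
    nlinarith [pi_gt_three]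
  set c := (2 * π) ^ (-(3:ℝ)/2) with hcdef
  have hc : 0 < c := by positivity
  have hrepr : ∀ z : E3, ftransform3 u z = (c : ℂ) * H (a • z) := by
    intro z
    rw [ftransform3_eq_fourier u z]
    congr 1
  refine ⟨c * K' * a * (a ^ 4)⁻¹, by positivity, fun x y hy => ?_⟩
  have hay : ‖a • y‖ ≤ 1 := by
    rw [norm_smul, Real.norm_eq_abs, abs_of_pos ha]
    calc a * ‖y‖ ≤ 1 * 1 := by
          apply mul_le_mul ha1 hy (norm_nonneg y) zero_le_one
      _ = 1 := by ring
  have key := hK' (a • x) (a • y) hay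
  have hsub : a • (x - y) = a • x - a • y := smul_sub _ _ _
  have h2 : a * (1 + ‖x‖) ≤ 1 + ‖a • x‖ := by
    rw [norm_smul, Real.norm_eq_abs, abs_of_pos ha]
    nlinarith [norm_nonneg x]
  have h3 : ((1 + ‖a • x‖) ^ 4)⁻¹ ≤ (a ^ 4)⁻¹ * ((1 + ‖x‖) ^ 4)⁻¹ := by
    rw [← mul_inv, ← mul_pow]
    have hmono : (a * (1 + ‖x‖)) ^ 4 ≤ (1 + ‖a • x‖) ^ 4 := by
      apply pow_le_pow_left₀ (by positivity) h2
    exact inv_anti₀ (by positivity) hmono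
  calc ‖ftransform3 u (x - y) - ftransform3 u x‖
      = ‖(c : ℂ)‖ * ‖H (a • x - a • y) - H (a • x)‖ := by
        rw [hrepr, hrepr, ← mul_sub, norm_mul, hsub]
    _ = c * ‖H (a • x - a • y) - H (a • x)‖ := by
        rw [Complex.norm_real, Real.norm_eq_abs, abs_of_pos hc]
    _ ≤ c * (K' * ‖a • y‖ * ((1 + ‖a • x‖) ^ 4)⁻¹) :=
        mul_le_mul_of_nonneg_left key hc.le
    _ = c * K' * (a * ‖y‖) * ((1 + ‖a • x‖) ^ 4)⁻¹ := by
        rw [norm_smul, Real.norm_eq_abs, abs_of_pos ha]; ring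
    _ ≤ c * K' * (a * ‖y‖) * ((a ^ 4)⁻¹ * ((1 + ‖x‖) ^ 4)⁻¹) := by
        apply mul_le_mul_of_nonneg_left h3 (by positivity)
    _ = c * K' * a * (a ^ 4)⁻¹ * ‖y‖ * ((1 + ‖x‖) ^ 4)⁻¹ := by ring

theorem wR_sup_and_integral_bounds
    (l : E3 → ℝ) (hsmooth : ContDiff ℝ (⊤ : ℕ∞) l) (h01 : ∀ p, 0 ≤ l p ∧ l p ≤ 1)
    (hrad : ∀ p q : E3, ‖p‖ = ‖q‖ → l p = l q)
    (hlow : ∀ p : E3, ‖p‖ ≤ 1 → l p = 0)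
    (hhigh : ∀ p : E3, 2 ≤ ‖p‖ → l p = 1) :
    ∃ C : ℝ, 0 < C ∧
      ∀ s R : ℝ, 0 < s → 0 < R → R ≤ s →
        (∀ x : E3, wR3 (ftransform3 (fun p => ((1 - l (s • p) : ℝ) : ℂ))) R x
            ≤ C * R ^ 2 / s ^ 5)
        ∧ (∫ x : E3, wR3 (ftransform3 (fun p => ((1 - l (s • p) : ℝ) : ℂ))) R x)
            ≤ C * R ^ 2 / s ^ 2 := by
  set u : E3 → ℂ := fun p => ((1 - l p : ℝ) : ℂ) with hu
  have hu_cd : ContDiff ℝ (⊤ : ℕ∞) u :=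
    Complex.ofRealCLM.contDiff.comp (contDiff_const.sub hsmooth)
  have hu_supp : HasCompactSupport u := by
    apply HasCompactSupport.intro (isCompact_closedBall (0 : E3) 2)
    intro p hp
    have h2 : 2 ≤ ‖p‖ := by
      by_contra h
      exact hp (by simpa [Metric.mem_closedBall, dist_zero_right] using (le_of_not_ge h))
    simp [hu, hhigh p h2]
  obtain ⟨K, hK0, hK⟩ := h1_diff_decay u hu_cd hu_supp
  set ψ : E3 → ℝ := fun z => ((1 + ‖z‖) ^ 4)⁻¹ with hψ
  have hψ_int : Integrable ψ := by
    have h4 : ((Module.finrank ℝ E3 : ℝ)) < 4 := by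
      rw [finrank_euclideanSpace_fin]; norm_num
    have heq : ψ = fun x : E3 => (1 + ‖x‖) ^ (-(4:ℝ)) := by
      funext x
      rw [Real.rpow_neg (by positivity), hψ]
      rw [Real.rpow_ofNat]
    rw [heq]
    exact integrable_one_add_norm h4
  set I₀ := ∫ x : E3, ψ x with hI₀
  have hI₀0 : 0 ≤ I₀ := integral_nonneg fun x => by positivity
  refine ⟨2 / π ^ 2 * K ^ 2 * (I₀ + 1) ^ 2, by positivity, fun s R hs hR hRs => ?_⟩
  set hfun := ftransform3 (fun p => ((1 - l (s • p) : ℝ) : ℂ)) with hhfun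
  have hscale : ∀ z : E3, hfun z = (((s ^ 3)⁻¹ : ℝ) : ℂ) * ftransform3 u (s⁻¹ • z) :=
    fun z => ftransform3_comp_smul u s hs z
  have hmain : ∀ x : E3, fRcut hfun R x ≤ K * R * (s ^ 4)⁻¹ * ψ (s⁻¹ • x) := by
    intro x
    apply Real.iSup_le _ (by positivity)
    rintro ⟨y, hy⟩
    have hy' : ‖y‖ ≤ R := by
      rw [Metric.mem_closedBall, dist_zero_right] at hy
      exact hy
    have h1 : s⁻¹ • (x - y) = s⁻¹ • x - s⁻¹ • y := smul_sub _ _ _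
    have hsy : ‖s⁻¹ • y‖ ≤ 1 := by
      rw [norm_smul, Real.norm_eq_abs, abs_of_pos (inv_pos.2 hs)]
      have := mul_le_mul_of_nonneg_left (hy'.trans hRs) (inv_pos.2 hs).le
      simpa [inv_mul_cancel₀ hs.ne'] using this
    have key := hK (s⁻¹ • x) (s⁻¹ • y) hsy
    have hsyR : ‖s⁻¹ • y‖ ≤ s⁻¹ * R := by
      rw [norm_smul, Real.norm_eq_abs, abs_of_pos (inv_pos.2 hs)]
      exact mul_le_mul_of_nonneg_left hy' (inv_pos.2 hs).le
    calc ‖hfun (x - (⟨y, hy⟩ : Metric.closedBall (0:E3) R) : E3) - hfun x‖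
        = (s ^ 3)⁻¹ * ‖ftransform3 u (s⁻¹ • x - s⁻¹ • y) - ftransform3 u (s⁻¹ • x)‖ := by
          rw [hscale, hscale, ← mul_sub, norm_mul, Complex.norm_real,
            Real.norm_eq_abs, abs_of_pos (by positivity : (0:ℝ) < (s ^ 3)⁻¹), h1]
      _ ≤ (s ^ 3)⁻¹ * (K * ‖s⁻¹ • y‖ * ((1 + ‖s⁻¹ • x‖) ^ 4)⁻¹) :=
          mul_le_mul_of_nonneg_left (key) (by positivity)
      _ ≤ (s ^ 3)⁻¹ * (K * (s⁻¹ * R) * ((1 + ‖s⁻¹ • x‖) ^ 4)⁻¹) := by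
          apply mul_le_mul_of_nonneg_left _ (by positivity)
          apply mul_le_mul_of_nonneg_right _ (by positivity)
          exact mul_le_mul_of_nonneg_left hsyR hK0.le
      _ = K * R * (s ^ 4)⁻¹ * ψ (s⁻¹ • x) := by
          simp only [hψ]
          field_simp
  have hψle1 : ∀ z : E3, ψ z ≤ 1 := by
    intro z
    simp only [hψ]
    apply inv_le_one_of_one_le₀
    have h1 : (1:ℝ) ≤ 1 + ‖z‖ := by linarith [norm_nonneg z]
    calc (1:ℝ) = 1 ^ 4 := by norm_num
      _ ≤ (1 + ‖z‖) ^ 4 := by gcongr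
  have hsup : ∀ x : E3, fRcut hfun R x ≤ K * R * (s ^ 4)⁻¹ := by
    intro x
    refine (hmain x).trans ?_
    calc K * R * (s ^ 4)⁻¹ * ψ (s⁻¹ • x) ≤ K * R * (s ^ 4)⁻¹ * 1 :=
          mul_le_mul_of_nonneg_left (hψle1 _) (by positivity)
      _ = K * R * (s ^ 4)⁻¹ := by ring
  have hfnonneg : ∀ x : E3, 0 ≤ fRcut hfun R x :=
    fun x => Real.iSup_nonneg fun y => norm_nonneg _
  have hΦint : Integrable (fun x : E3 => K * R * (s ^ 4)⁻¹ * ψ (s⁻¹ • x)) :=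
    (hψ_int.comp_smul (inv_ne_zero hs.ne')).const_mul _
  have hψint_eq : (∫ x : E3, ψ (s⁻¹ • x)) = s ^ 3 * I₀ := by
    rw [MeasureTheory.Measure.integral_comp_inv_smul_of_nonneg volume ψ hs.le,
      finrank_euclideanSpace_fin, smul_eq_mul]
  have hAle : (∫ x : E3, fRcut hfun R x) ≤ K * R * (s ^ 4)⁻¹ * (s ^ 3 * I₀) := by
    have hmono := integral_mono_of_nonneg (Filter.Eventually.of_forall hfnonneg) hΦint
      (Filter.Eventually.of_forall hmain)
    rwa [MeasureTheory.integral_const_mul, hψint_eq] at hmono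
  have hA0 : 0 ≤ ∫ x : E3, fRcut hfun R x := integral_nonneg hfnonneg
  have hI₀sq : I₀ ≤ (I₀ + 1) ^ 2 := by nlinarith
  have hI₀sq2 : I₀ ^ 2 ≤ (I₀ + 1) ^ 2 := by nlinarith
  constructor
  · intro x
    have hstep : wR3 hfun R x
        ≤ 2 / π ^ 2 * (K * R * (s ^ 4)⁻¹) * (K * R * (s ^ 4)⁻¹ * (s ^ 3 * I₀)) := by
      unfold wR3
      exact mul_le_mul
        (mul_le_mul_of_nonneg_left (hsup x) (by positivity : (0:ℝ) ≤ 2 / π ^ 2))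
        hAle hA0 (by positivity)
    refine hstep.trans ?_
    have heq : 2 / π ^ 2 * (K * R * (s ^ 4)⁻¹) * (K * R * (s ^ 4)⁻¹ * (s ^ 3 * I₀))
        = 2 / π ^ 2 * K ^ 2 * I₀ * R ^ 2 / s ^ 5 := by
      field_simp
    rw [heq, div_eq_mul_inv, div_eq_mul_inv]
    exact mul_le_mul_of_nonneg_right
      (mul_le_mul_of_nonneg_right (mul_le_mul_of_nonneg_left hI₀sq (by positivity))
        (by positivity)) (by positivity)
  · have hrw : (fun x : E3 => wR3 hfun R x)
        = fun x : E3 => (2 / π ^ 2 * ∫ y : E3, fRcut hfun R y) * fRcut hfun R x := by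
      funext x
      unfold wR3
      ring
    calc (∫ x : E3, wR3 hfun R x)
        = (2 / π ^ 2 * ∫ y : E3, fRcut hfun R y) * ∫ x : E3, fRcut hfun R x := by
          rw [hrw, MeasureTheory.integral_const_mul]
      _ = 2 / π ^ 2 * (∫ x : E3, fRcut hfun R x) * (∫ x : E3, fRcut hfun R x) := by ring
      _ ≤ 2 / π ^ 2 * (K * R * (s ^ 4)⁻¹ * (s ^ 3 * I₀))
            * (K * R * (s ^ 4)⁻¹ * (s ^ 3 * I₀)) :=
          mul_le_mul (mul_le_mul_of_nonneg_left hAle (by positivity)) hAle hA0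
            (by positivity)
      _ = 2 / π ^ 2 * K ^ 2 * I₀ ^ 2 * R ^ 2 / s ^ 2 := by
          field_simp
      _ ≤ 2 / π ^ 2 * K ^ 2 * (I₀ + 1) ^ 2 * R ^ 2 / s ^ 2 := by
          rw [div_eq_mul_inv, div_eq_mul_inv]
          exact mul_le_mul_of_nonneg_right
            (mul_le_mul_of_nonneg_right (mul_le_mul_of_nonneg_left hI₀sq2 (by positivity))
              (by positivity)) (by positivity)
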